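/- arXiv:1712.07775 — 2 statements merged into one kernel-verified Lean document; each statement's English description precedes it below -/
import Mathlib

section
/- Let N = (N_1, …, N_n) be a vector of n independent standard normal random variables and ‖N‖₁ = Σ_{i=1}^n |N_i|. For every a ≥ √(2/π), every 0 < c < 1 and every n ≥ 1: E[ exp( c‖N‖₁²/(2n) ) · 1{‖N‖₁ ≤ an} ] ≤ exp(cn/π) + cn · ∫_{√(2/π)}^{a} x · exp( n·( c x²/2 − μ*(x) ) ) dx. -/
open MeasureTheory ProbabilityTheory Real Set

noncomputable def gaussMatrix (n : ℕ) : Measure (Fin n → Fin n → ℝ) :=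
  Measure.pi fun _ => Measure.pi fun _ => gaussianReal 0 1

noncomputable def gaussVec (n : ℕ) : Measure (Fin n → ℝ) :=
  Measure.pi fun _ => gaussianReal 0 1

/-- The symmetric, zero-diagonal coupling matrix built from the i.i.d. upper-triangular
standard Gaussians. -/
def Wmat {n : ℕ} (ω : Fin n → Fin n → ℝ) (i j : Fin n) : ℝ :=
  if i < j then ω i j else if j < i then ω j i else 0

/-- The Sherrington--Kirkpatrick Hamiltonian `H(σ) = ∑_{i<j} σ_i σ_j W_{ij}`. -/
noncomputable def Ham {n : ℕ} (σ : Fin n → ℝ) (ω : Fin n → Fin n → ℝ) : ℝ :=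
  ∑ i : Fin n, ∑ j : Fin n, if i < j then σ i * σ j * Wmat ω i j else 0

/-- `σ` with its `i`-th spin flipped. -/
def flipSpin {n : ℕ} (σ : Fin n → ℝ) (i : Fin n) : Fin n → ℝ :=
  Function.update σ i (-(σ i))

/-- `σ` is locally optimal if no single spin flip decreases the energy. -/
def IsLocalOpt {n : ℕ} (σ : Fin n → ℝ) (ω : Fin n → Fin n → ℝ) : Prop :=
  ∀ i : Fin n, Ham σ ω ≤ Ham (flipSpin σ i) ω

/-- `σ ∈ {−1,+1}^n`. -/
def IsSpin {n : ℕ} (σ : Fin n → ℝ) : Prop := ∀ i, σ i = 1 ∨ σ i = -1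

/-- `‖x‖₁ = ∑ |x i|`. -/
def l1 {n : ℕ} (ω : Fin n → ℝ) : ℝ := ∑ i, |ω i|

/-- The standard normal cumulative distribution function `Φ`. -/
noncomputable def normCdf (t : ℝ) : ℝ :=
  ∫ x in Set.Iic t, (Real.sqrt (2 * Real.pi))⁻¹ * Real.exp (-x ^ 2 / 2)

/-- `φ(λ) = log (2 Φ(λ))`. -/
noncomputable def phiFn (l : ℝ) : ℝ := Real.log (2 * normCdf l)

/-- The Fenchel–Légendre transform `μ*(x) = sup_{λ ≥ 0} (λ x − λ²/2 − φ(λ))`. -/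
noncomputable def muStar (x : ℝ) : ℝ :=
  ⨆ l : {l : ℝ // 0 ≤ l}, ((l : ℝ) * x - (l : ℝ) ^ 2 / 2 - phiFn l)

/-- `R(x) = x²/4 − μ*(x)`. -/
noncomputable def Rfun (x : ℝ) : ℝ := x ^ 2 / 4 - muStar x


lemma integrable_gauss : Integrable (fun x : ℝ => Real.exp (-x ^ 2 / 2)) := by
  have h := integrable_exp_neg_mul_sq (show (0:ℝ) < 1/2 by norm_num)
  exact h.congr (Filter.Eventually.of_forall fun x => by ring_nf)

lemma integrable_gauss' : Integrable (fun x : ℝ => (Real.sqrt (2 * Real.pi))⁻¹ * Real.exp (-x ^ 2 / 2)) :=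
  integrable_gauss.const_mul _

lemma gauss_total : ∫ x : ℝ, Real.exp (-x ^ 2 / 2) = Real.sqrt (2 * Real.pi) := by
  have h := integral_gaussian (1/2 : ℝ)
  have : ∀ x : ℝ, Real.exp (-(1/2 : ℝ) * x ^ 2) = Real.exp (-x ^ 2 / 2) := fun x => by ring_nf
  rw [show (fun x : ℝ => Real.exp (-x ^ 2 / 2)) = fun x : ℝ => Real.exp (-(1/2 : ℝ) * x ^ 2) from funext fun x => (this x).symm]
  rw [h]; rw [show Real.pi/(1/2) = 2*Real.pi by ring]

lemma sqrt2pi_pos : 0 < Real.sqrt (2 * Real.pi) := Real.sqrt_pos.2 (by positivity)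

lemma gauss_total' : ∫ x : ℝ, (Real.sqrt (2 * Real.pi))⁻¹ * Real.exp (-x ^ 2 / 2) = 1 := by
  rw [MeasureTheory.integral_const_mul, gauss_total, inv_mul_cancel₀ sqrt2pi_pos.ne']

lemma normCdf_pos (t : ℝ) : 0 < normCdf t := by
  rw [normCdf, setIntegral_pos_iff_support_of_nonneg_ae]
  · have : Function.support (fun x : ℝ => (Real.sqrt (2 * Real.pi))⁻¹ * Real.exp (-x ^ 2 / 2)) = Set.univ := by
      ext x; simp [Function.mem_support]; positivity
    rw [this, Set.univ_inter]
    simp [Real.volume_Iic]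
  · exact Filter.Eventually.of_forall fun x => by positivity
  · exact integrable_gauss'.integrableOn

lemma normCdf_zero : normCdf 0 = 1/2 := by
  have hsym : (∫ x in Set.Iic (0:ℝ), (Real.sqrt (2 * Real.pi))⁻¹ * Real.exp (-x ^ 2 / 2))
      = ∫ x in Set.Ioi (0:ℝ), (Real.sqrt (2 * Real.pi))⁻¹ * Real.exp (-x ^ 2 / 2) := by
    have h := integral_comp_neg_Iic (0:ℝ) (fun x => (Real.sqrt (2 * Real.pi))⁻¹ * Real.exp (-x ^ 2 / 2))
    simp only [neg_zero, neg_sq] at h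
    exact h
  have htot := intervalIntegral.integral_Iic_add_Ioi (b := (0:ℝ))
    integrable_gauss'.integrableOn integrable_gauss'.integrableOn
  rw [gauss_total'] at htot
  rw [normCdf]
  linarith [hsym, htot]

lemma normCdf_mono : Monotone normCdf := by
  intro s t hst
  exact setIntegral_mono_set integrable_gauss'.integrableOn
    (Filter.Eventually.of_forall fun x => by positivity)
    (HasSubset.Subset.eventuallyLE (Set.Iic_subset_Iic.2 hst))

lemma two_normCdf_pos (l : ℝ) : 0 < 2 * normCdf l := by linarith [normCdf_pos l]

lemma exp_phiFn (l : ℝ) : Real.exp (phiFn l) = 2 * normCdf l :=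
  Real.exp_log (two_normCdf_pos l)

lemma phiFn_nonneg {l : ℝ} (hl : 0 ≤ l) : 0 ≤ phiFn l := by
  have : (1:ℝ) ≤ 2 * normCdf l := by
    have := normCdf_mono hl; rw [normCdf_zero] at this; linarith
  exact Real.log_nonneg this

lemma phiFn_zero : phiFn 0 = 0 := by
  rw [phiFn, normCdf_zero]; norm_num

lemma shift_Ioi (l : ℝ) (g : ℝ → ℝ) :
    ∫ x in Set.Ioi (0:ℝ), g (x - l) = ∫ y in Set.Ioi (-l), g y := by
  have A : MeasurableEmbedding (fun x : ℝ => x - l) :=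
    (Homeomorph.subRight l).isClosedEmbedding.measurableEmbedding
  have B := A.setIntegral_map (μ := volume) g (Set.Ioi (-l))
  rw [show Measure.map (fun x : ℝ => x - l) volume = volume from by
      simp_rw [sub_eq_add_neg]; exact map_add_right_eq_self volume (-l)] at B
  rw [show (fun x : ℝ => x - l) ⁻¹' Set.Ioi (-l) = Set.Ioi 0 from by
      ext x; simp] at B
  exact B.symm

lemma sym_Ioi (l : ℝ) :
    ∫ x in Set.Ioi (-l), Real.exp (-x ^ 2 / 2) = ∫ x in Set.Iic l, Real.exp (-x ^ 2 / 2) := by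
  have h := integral_comp_neg_Iic l (fun x => Real.exp (-x ^ 2 / 2))
  simp only [neg_sq] at h
  exact h.symm

lemma integrable_exp_abs_gauss (l : ℝ) :
    Integrable (fun x : ℝ => Real.exp (l * |x|) * ((Real.sqrt (2 * Real.pi))⁻¹ * Real.exp (-x ^ 2 / 2))) := by
  have hg : Integrable (fun x : ℝ => (Real.sqrt (2 * Real.pi))⁻¹ * Real.exp (l ^ 2) * Real.exp (-x ^ 2 / 4)) := by
    have h := integrable_exp_neg_mul_sq (show (0:ℝ) < 1/4 by norm_num)
    exact (h.congr (Filter.Eventually.of_forall fun x => by ring_nf)).const_mul _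
  refine hg.mono ?_ (Filter.Eventually.of_forall fun x => ?_)
  · apply Continuous.aestronglyMeasurable
    fun_prop
  · have h1 : Real.exp (l * |x|) * ((Real.sqrt (2 * Real.pi))⁻¹ * Real.exp (-x ^ 2 / 2))
        = (Real.sqrt (2 * Real.pi))⁻¹ * Real.exp (l * |x| + -x ^ 2 / 2) := by
      rw [Real.exp_add]; ring
    have h2 : l * |x| + -x ^ 2 / 2 ≤ l ^ 2 + -x ^ 2 / 4 := by
      nlinarith [sq_nonneg (|l| - |x| / 2), abs_nonneg x, abs_nonneg l,
        le_abs_self l, sq_abs x, sq_abs l, mul_le_mul_of_nonneg_right (le_abs_self l) (abs_nonneg x)]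
    rw [Real.norm_of_nonneg (by positivity), Real.norm_of_nonneg (by positivity), h1]
    rw [show (Real.sqrt (2 * Real.pi))⁻¹ * Real.exp (l ^ 2) * Real.exp (-x ^ 2 / 4)
        = (Real.sqrt (2 * Real.pi))⁻¹ * Real.exp (l ^ 2 + -x ^ 2 / 4) by rw [Real.exp_add]; ring]
    have := Real.exp_le_exp.2 h2
    have hc0 : (0:ℝ) ≤ (Real.sqrt (2 * Real.pi))⁻¹ := by positivity
    exact mul_le_mul_of_nonneg_left this hc0

lemma mgf_abs (l : ℝ) :
    ∫ x : ℝ, Real.exp (l * |x|) * ((Real.sqrt (2 * Real.pi))⁻¹ * Real.exp (-x ^ 2 / 2))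
      = Real.exp (l ^ 2 / 2 + phiFn l) := by
  set c0 : ℝ := (Real.sqrt (2 * Real.pi))⁻¹ with hc0
  have habs : (fun x : ℝ => Real.exp (l * |x|) * (c0 * Real.exp (-x ^ 2 / 2)))
      = fun x : ℝ => (fun t : ℝ => Real.exp (l * t) * (c0 * Real.exp (-t ^ 2 / 2))) |x| := by
    funext x; simp only [sq_abs]
  calc ∫ x : ℝ, Real.exp (l * |x|) * (c0 * Real.exp (-x ^ 2 / 2))
      = 2 * ∫ x in Set.Ioi (0:ℝ), Real.exp (l * x) * (c0 * Real.exp (-x ^ 2 / 2)) := by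
        rw [habs]
        exact integral_comp_abs (f := fun t => Real.exp (l * t) * (c0 * Real.exp (-t ^ 2 / 2)))
    _ = 2 * ∫ x in Set.Ioi (0:ℝ), (c0 * Real.exp (l ^ 2 / 2)) * Real.exp (-(x - l) ^ 2 / 2) := by
        congr 1
        refine setIntegral_congr_fun measurableSet_Ioi fun x _ => ?_
        rw [show Real.exp (l * x) * (c0 * Real.exp (-x ^ 2 / 2)) = c0 * Real.exp (l * x + -x ^ 2 / 2) by
          rw [Real.exp_add]; ring]
        rw [show (c0 * Real.exp (l ^ 2 / 2)) * Real.exp (-(x - l) ^ 2 / 2) = c0 * Real.exp (l ^ 2 / 2 + -(x - l) ^ 2 / 2) by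
          rw [Real.exp_add]; ring]
        congr 1
        ring
    _ = 2 * ((c0 * Real.exp (l ^ 2 / 2)) * ∫ x in Set.Ioi (0:ℝ), Real.exp (-(x - l) ^ 2 / 2)) := by
        rw [MeasureTheory.integral_const_mul]
    _ = 2 * ((c0 * Real.exp (l ^ 2 / 2)) * ∫ x in Set.Iic l, Real.exp (-x ^ 2 / 2)) := by
        rw [shift_Ioi l (fun u => Real.exp (-u ^ 2 / 2)), sym_Ioi]
    _ = Real.exp (l ^ 2 / 2) * (2 * normCdf l) := by
        rw [normCdf, MeasureTheory.integral_const_mul]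
        ring
    _ = Real.exp (l ^ 2 / 2 + phiFn l) := by
        rw [Real.exp_add, exp_phiFn]
section aux
open MeasureTheory ProbabilityTheory

lemma pdf_eq : ProbabilityTheory.gaussianPDFReal 0 1
    = fun x : ℝ => (Real.sqrt (2 * Real.pi))⁻¹ * Real.exp (-x ^ 2 / 2) := by
  funext x
  simp [ProbabilityTheory.gaussianPDFReal]

lemma lintegral_exp_abs (l : ℝ) :
    ∫⁻ x, ENNReal.ofReal (Real.exp (l * |x|)) ∂(gaussianReal 0 1)
      = ENNReal.ofReal (Real.exp (l ^ 2 / 2 + phiFn l)) := by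
  rw [gaussianReal_of_var_ne_zero 0 one_ne_zero,
    lintegral_withDensity_eq_lintegral_mul _ (measurable_gaussianPDF 0 1)
      (show Measurable fun x : ℝ => ENNReal.ofReal (Real.exp (l * |x|)) by
        exact ((Real.continuous_exp.comp (continuous_const.mul continuous_abs)).measurable).ennreal_ofReal)]
  have h : ∀ x : ℝ, (gaussianPDF 0 1 x) * ENNReal.ofReal (Real.exp (l * |x|))
      = ENNReal.ofReal (Real.exp (l * |x|) * gaussianPDFReal 0 1 x) := by
    intro x
    rw [gaussianPDF, ← ENNReal.ofReal_mul (gaussianPDFReal_nonneg 0 1 x), mul_comm]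
  simp only [Pi.mul_apply]
  simp_rw [h]
  rw [← MeasureTheory.ofReal_integral_eq_lintegral_ofReal]
  · congr 1
    rw [← mgf_abs l]
    congr 1
    funext x
    rw [pdf_eq]
  · simpa [pdf_eq] using integrable_exp_abs_gauss l
  · exact Filter.Eventually.of_forall fun x =>
      mul_nonneg (Real.exp_nonneg _) (gaussianPDFReal_nonneg 0 1 x)

lemma lintegral_pi_pow (ν : Measure ℝ) [SigmaFinite ν] (f : ℝ → ENNReal) (hf : Measurable f) :
    ∀ n : ℕ, ∫⁻ x : Fin n → ℝ, ∏ i, f (x i) ∂(Measure.pi fun _ => ν)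
      = (∫⁻ x, f x ∂ν) ^ n := by
  intro n
  induction n with
  | zero => simp [Measure.pi_of_empty]
  | succ m ih =>
    have hmp := MeasureTheory.measurePreserving_piFinSuccAbove (fun _ : Fin (m + 1) => ν) 0
    have hF : Measurable (fun p : ℝ × (Fin m → ℝ) => f p.1 * ∏ j, f (p.2 j)) := by
      apply Measurable.mul
      · exact hf.comp measurable_fst
      · exact Finset.measurable_prod _ fun j _ => hf.comp ((measurable_pi_apply j).comp measurable_snd)
    have key := hmp.lintegral_comp hF
    have hfun : ∀ x : Fin (m + 1) → ℝ,
        (fun p : ℝ × (Fin m → ℝ) => f p.1 * ∏ j, f (p.2 j)) (MeasurableEquiv.piFinSuccAbove (fun _ => ℝ) 0 x)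
          = ∏ i, f (x i) := by
      intro x
      simp [MeasurableEquiv.piFinSuccAbove_apply, Fin.prod_univ_succ, Fin.zero_succAbove, Fin.tail]
    simp_rw [hfun] at key
    rw [key, show (∫⁻ b : ℝ × (Fin m → ℝ), f b.1 * ∏ j, f (b.2 j) ∂ν.prod (Measure.pi fun _ => ν))
        = (∫⁻ x, f x ∂ν) * ∫⁻ y : Fin m → ℝ, ∏ j, f (y j) ∂(Measure.pi fun _ => ν) from
      MeasureTheory.lintegral_prod_mul hf.aemeasurable
        (Finset.measurable_prod _ fun j _ => hf.comp (measurable_pi_apply j)).aemeasurable,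
      ih, pow_succ]
    ring
end aux

section main
open MeasureTheory ProbabilityTheory

instance (n : ℕ) : IsProbabilityMeasure (gaussVec n) := by
  unfold gaussVec; infer_instance

lemma l1_nonneg {n : ℕ} (ω : Fin n → ℝ) : 0 ≤ l1 ω :=
  Finset.sum_nonneg fun i _ => abs_nonneg _

lemma measurable_l1 {n : ℕ} : Measurable (l1 (n := n)) :=
  Finset.measurable_sum _ fun i _ => (measurable_pi_apply i).abs

instance : Nonempty {l : ℝ // 0 ≤ l} := ⟨⟨0, le_refl 0⟩⟩

lemma muStar_bddAbove (x : ℝ) :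
    BddAbove (Set.range fun l : {l : ℝ // 0 ≤ l} => ((l : ℝ) * x - (l : ℝ) ^ 2 / 2 - phiFn l)) := by
  refine ⟨x ^ 2 / 2, ?_⟩
  rintro y ⟨⟨l, hl⟩, rfl⟩
  have h1 : phiFn l ≥ 0 := phiFn_nonneg hl
  have h2 : l * x - l ^ 2 / 2 ≤ x ^ 2 / 2 := by nlinarith [sq_nonneg (l - x)]
  simp only
  linarith

lemma muStar_nonneg (x : ℝ) : 0 ≤ muStar x := by
  have := le_ciSup (muStar_bddAbove x) ⟨0, le_refl 0⟩
  simp only [NNReal.coe_zero] at this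
  calc (0:ℝ) = (0:ℝ) * x - (0:ℝ) ^ 2 / 2 - phiFn 0 := by rw [phiFn_zero]; ring
    _ ≤ muStar x := le_ciSup (muStar_bddAbove x) ⟨0, le_refl 0⟩

lemma muStar_mono : Monotone muStar := by
  intro x y hxy
  refine ciSup_mono (muStar_bddAbove y) fun l => ?_
  have : (l : ℝ) * x ≤ (l : ℝ) * y := mul_le_mul_of_nonneg_left hxy l.2
  linarith

lemma measurable_muStar : Measurable muStar := muStar_mono.measurable
end main

section chernoff
open MeasureTheory ProbabilityTheory

lemma lintegral_exp_l1 (n : ℕ) (l : ℝ) :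
    ∫⁻ ω, ENNReal.ofReal (Real.exp (l * l1 ω)) ∂gaussVec n
      = ENNReal.ofReal (Real.exp (l ^ 2 / 2 + phiFn l)) ^ n := by
  have h : ∀ ω : Fin n → ℝ, ENNReal.ofReal (Real.exp (l * l1 ω))
      = ∏ i, ENNReal.ofReal (Real.exp (l * |ω i|)) := by
    intro ω
    rw [l1, Finset.mul_sum, Real.exp_sum, ENNReal.ofReal_prod_of_nonneg fun i _ => Real.exp_nonneg _]
  simp_rw [h]
  rw [gaussVec, lintegral_pi_pow _ _
    (show Measurable fun t : ℝ => ENNReal.ofReal (Real.exp (l * |t|)) from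
      ((Real.continuous_exp.comp (continuous_const.mul continuous_abs)).measurable).ennreal_ofReal),
    lintegral_exp_abs]

lemma chernoff (n : ℕ) (hn : 1 ≤ n) (x : ℝ) :
    gaussVec n {ω | x * n ≤ l1 ω} ≤ ENNReal.ofReal (Real.exp (-(n : ℝ) * muStar x)) := by
  have hn0 : (0:ℝ) < n := by exact_mod_cast hn
  have key : ∀ l : ℝ, 0 ≤ l → gaussVec n {ω | x * n ≤ l1 ω}
      ≤ ENNReal.ofReal (Real.exp (-(n:ℝ) * (l * x - l ^ 2 / 2 - phiFn l))) := by
    intro l hl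
    set ε : ENNReal := ENNReal.ofReal (Real.exp (l * (x * n))) with hε
    have hε0 : ε ≠ 0 := by
      simp only [hε, ne_eq, ENNReal.ofReal_eq_zero, not_le]
      exact Real.exp_pos _
    have hεT : ε ≠ ⊤ := ENNReal.ofReal_ne_top
    have hsub : {ω : Fin n → ℝ | x * n ≤ l1 ω}
        ⊆ {ω | ε ≤ ENNReal.ofReal (Real.exp (l * l1 ω))} := by
      intro ω hω
      exact ENNReal.ofReal_le_ofReal (Real.exp_le_exp.2 (by
        have := mul_le_mul_of_nonneg_left hω hl
        linarith [this]))
    have hmeas : AEMeasurable (fun ω => ENNReal.ofReal (Real.exp (l * l1 ω))) (gaussVec n) :=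
      ((measurable_l1.const_mul l).exp.ennreal_ofReal).aemeasurable
    have h1 : ε * gaussVec n {ω | x * n ≤ l1 ω}
        ≤ ∫⁻ ω, ENNReal.ofReal (Real.exp (l * l1 ω)) ∂gaussVec n := by
      refine le_trans ?_ (mul_meas_ge_le_lintegral₀ hmeas ε)
      exact mul_le_mul_right (measure_mono hsub) ε
    rw [lintegral_exp_l1] at h1
    have h2 : gaussVec n {ω | x * n ≤ l1 ω}
        ≤ ENNReal.ofReal (Real.exp (l ^ 2 / 2 + phiFn l)) ^ n / ε :=
      (ENNReal.le_div_iff_mul_le (Or.inl hε0) (Or.inl hεT)).2 (by rwa [mul_comm])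
    refine h2.trans ?_
    rw [← ENNReal.ofReal_pow (Real.exp_nonneg _), ← Real.exp_nat_mul, hε,
      ← ENNReal.ofReal_div_of_pos (Real.exp_pos _), ← Real.exp_sub]
    apply ENNReal.ofReal_le_ofReal
    apply Real.exp_le_exp.2
    apply le_of_eq
    ring
  by_cases hP : gaussVec n {ω | x * n ≤ l1 ω} = 0
  · rw [hP]; exact zero_le
  · set P := gaussVec n {ω | x * ↑n ≤ l1 ω} with hPdef
    have hPfin : P ≠ ⊤ := measure_ne_top _ _
    have hp : 0 < P.toReal := ENNReal.toReal_pos hP hPfin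
    have hkey : ∀ l : {l : ℝ // 0 ≤ l},
        ((l:ℝ) * x - (l:ℝ) ^ 2 / 2 - phiFn l) ≤ -Real.log P.toReal / n := by
      rintro ⟨l, hl⟩
      have h1 : P.toReal ≤ Real.exp (-(n:ℝ) * (l * x - l ^ 2 / 2 - phiFn l)) :=
        ENNReal.toReal_le_of_le_ofReal (Real.exp_nonneg _) (key l hl)
      have h2 : Real.log P.toReal ≤ -(n:ℝ) * (l * x - l ^ 2 / 2 - phiFn l) :=
        (Real.log_le_iff_le_exp hp).2 h1
      show l * x - l ^ 2 / 2 - phiFn l ≤ -Real.log P.toReal / ↑n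
      rw [le_div_iff₀ hn0]
      nlinarith [h2]
    have hsup : muStar x ≤ -Real.log P.toReal / n := ciSup_le hkey
    have hlog : Real.log P.toReal ≤ -(n:ℝ) * muStar x := by
      have h3 := mul_le_mul_of_nonpos_left hsup (show -(n:ℝ) ≤ 0 by linarith)
      have h4 : -(n:ℝ) * (-Real.log P.toReal / n) = Real.log P.toReal := by
        field_simp
      linarith [h3, h4.symm.le]
    have hfinal : P.toReal ≤ Real.exp (-(n:ℝ) * muStar x) := by
      calc P.toReal = Real.exp (Real.log P.toReal) := (Real.exp_log hp).symm
        _ ≤ Real.exp (-(n:ℝ) * muStar x) := Real.exp_le_exp.2 hlog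
    calc P = ENNReal.ofReal P.toReal := (ENNReal.ofReal_toReal hPfin).symm
      _ ≤ ENNReal.ofReal (Real.exp (-(n:ℝ) * muStar x)) := ENNReal.ofReal_le_ofReal hfinal

end chernoff

lemma ftc (C b s : ℝ) (hbs : b ≤ s) :
    ∫ x in b..s, C * x * Real.exp (C * x ^ 2 / 2)
      = Real.exp (C * s ^ 2 / 2) - Real.exp (C * b ^ 2 / 2) := by
  have hderiv : ∀ x ∈ Set.uIcc b s,
      HasDerivAt (fun t => Real.exp (C * t ^ 2 / 2)) (C * x * Real.exp (C * x ^ 2 / 2)) x := by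
    intro x _
    have h1 : HasDerivAt (fun t : ℝ => C * t ^ 2 / 2) (C * x) x := by
      have h := (hasDerivAt_pow 2 x).const_mul (C / 2)
      have heq : (fun t : ℝ => C / 2 * t ^ 2) = fun t : ℝ => C * t ^ 2 / 2 := by
        funext t; ring
      rw [heq] at h
      refine h.congr_deriv ?_
      norm_num
      ring
    have h2 := h1.exp
    convert h2 using 1
    ring
  rw [intervalIntegral.integral_eq_sub_of_hasDerivAt hderiv ?_]
  exact (Continuous.intervalIntegrable (by fun_prop) _ _)


theorem stmt10 (n : ℕ) (hn : 1 ≤ n) (a c : ℝ) (ha : Real.sqrt (2 / Real.pi) ≤ a)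
    (hc0 : 0 < c) (hc1 : c < 1) :
    (∫ ω in {ω | l1 ω ≤ a * n}, Real.exp (c * (l1 ω) ^ 2 / (2 * n)) ∂gaussVec n) ≤
      Real.exp (c * n / Real.pi) +
        c * n * ∫ x in Real.sqrt (2 / Real.pi)..a,
          x * Real.exp ((n : ℝ) * (c * x ^ 2 / 2 - muStar x)) := by
  have hπ : 0 < Real.pi := Real.pi_pos
  set b : ℝ := Real.sqrt (2 / Real.pi) with hbdef
  have hb0 : 0 ≤ b := Real.sqrt_nonneg _
  have hb2 : b ^ 2 = 2 / Real.pi := Real.sq_sqrt (by positivity)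
  have hn0 : (0:ℝ) < n := by exact_mod_cast hn
  set μ := gaussVec n with hμ
  set A : Set (Fin n → ℝ) := {ω | l1 ω ≤ a * n} with hAdef
  have hA : MeasurableSet A := measurableSet_le measurable_l1 measurable_const
  set g : ℝ → ℝ := fun x => c * n * x * Real.exp (c * n * x ^ 2 / 2) with hgdef
  set G : ℝ → (Fin n → ℝ) → ENNReal :=
    fun x ω => if x * n ≤ l1 ω then ENNReal.ofReal (g x) else 0 with hGdef
  set h : ℝ → ℝ := fun x => g x * Real.exp (-(n : ℝ) * muStar x) with hhdef
  have hgcont : Continuous g := by fun_prop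
  have hf0meas : Measurable fun ω : Fin n → ℝ => Real.exp (c * l1 ω ^ 2 / (2 * n)) :=
    (((measurable_l1.pow_const 2).const_mul c).div_const (2 * n)).exp
  -- Step 1: Bochner integral to lintegral
  rw [MeasureTheory.integral_eq_lintegral_of_nonneg_ae
    (Filter.Eventually.of_forall fun ω => Real.exp_nonneg _)
    hf0meas.aestronglyMeasurable]
  -- pointwise bound
  have hpt : ∀ ω ∈ A, ENNReal.ofReal (Real.exp (c * l1 ω ^ 2 / (2 * n)))
      ≤ ENNReal.ofReal (Real.exp (c * n / Real.pi)) + ∫⁻ x in Set.Ioc b a, G x ω := by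
    intro ω hω
    have hl1 : 0 ≤ l1 ω := l1_nonneg ω
    by_cases hcase : l1 ω ≤ b * n
    · have hbπ : b ^ 2 * Real.pi = 2 := by rw [hb2]; field_simp
      have h1 : l1 ω ^ 2 ≤ b ^ 2 * n ^ 2 := by nlinarith
      have h1' : c * (l1 ω ^ 2 * Real.pi) ≤ c * (b ^ 2 * (n:ℝ) ^ 2 * Real.pi) :=
        mul_le_mul_of_nonneg_left (mul_le_mul_of_nonneg_right h1 hπ.le) hc0.le
      have e2 : c * (b ^ 2 * (n:ℝ) ^ 2 * Real.pi) = c * n * (2 * n) := by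
        rw [hb2]; field_simp
      have h2 : c * l1 ω ^ 2 / (2 * n) ≤ c * n / Real.pi := by
        rw [div_le_div_iff₀ (by positivity) hπ]
        linarith
      refine le_trans (ENNReal.ofReal_le_ofReal (Real.exp_le_exp.2 h2)) le_self_add
    · push_neg at hcase
      set s : ℝ := l1 ω / n with hsdef
      have hsn : s * n = l1 ω := div_mul_cancel₀ _ hn0.ne'
      have hbs : b < s := by rw [hsdef, lt_div_iff₀ hn0]; linarith
      have hsa : s ≤ a := by
        rw [hsdef, div_le_iff₀ hn0]
        exact hω
      have hcongr : ∫⁻ x in Set.Ioc b s, ENNReal.ofReal (g x) = ∫⁻ x in Set.Ioc b s, G x ω := by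
        refine setLIntegral_congr_fun measurableSet_Ioc (fun x hx => ?_)
        have hxs : x * n ≤ l1 ω := by
          rw [← hsn]
          exact mul_le_mul_of_nonneg_right hx.2 hn0.le
        simp only [hGdef, if_pos hxs]
      have hval : ∫⁻ x in Set.Ioc b s, ENNReal.ofReal (g x)
          = ENNReal.ofReal (Real.exp (c * n * s ^ 2 / 2) - Real.exp (c * n * b ^ 2 / 2)) := by
        rw [← MeasureTheory.ofReal_integral_eq_lintegral_ofReal]
        · congr 1
          rw [← intervalIntegral.integral_of_le hbs.le]
          exact ftc (c * n) b s hbs.le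
        · exact Continuous.integrableOn_Ioc hgcont
        · refine (ae_restrict_iff' measurableSet_Ioc).2 (Filter.Eventually.of_forall fun x hx => ?_)
          have hx0 : 0 ≤ x := le_trans hb0 hx.1.le
          exact mul_nonneg (mul_nonneg (mul_nonneg hc0.le hn0.le) hx0) (Real.exp_nonneg _)
      have hexp_b : c * n * b ^ 2 / 2 = c * n / Real.pi := by rw [hb2]; ring
      have hexp_s : c * l1 ω ^ 2 / (2 * n) = c * n * s ^ 2 / 2 := by
        rw [hsdef]; field_simp
      have hsub_nonneg : Real.exp (c * n * b ^ 2 / 2) ≤ Real.exp (c * n * s ^ 2 / 2) := by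
        apply Real.exp_le_exp.2
        have hbs2 : b ^ 2 ≤ s ^ 2 := by nlinarith
        have h' := mul_le_mul_of_nonneg_left hbs2 (mul_nonneg hc0.le hn0.le)
        linarith
      have hmain : ENNReal.ofReal (Real.exp (c * l1 ω ^ 2 / (2 * n)))
          = ENNReal.ofReal (Real.exp (c * n / Real.pi))
            + ENNReal.ofReal (Real.exp (c * n * s ^ 2 / 2) - Real.exp (c * n * b ^ 2 / 2)) := by
        rw [← ENNReal.ofReal_add (Real.exp_nonneg _) (by linarith)]
        congr 1
        rw [hexp_s, ← hexp_b]
        ring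
      rw [hmain]
      refine add_le_add_right ?_ _
      rw [← hval, hcongr]
      exact lintegral_mono_set (Set.Ioc_subset_Ioc_right hsa)
  -- measurability of uncurried G
  have hGunc : Measurable (Function.uncurry fun (ω : Fin n → ℝ) (x : ℝ) => G x ω) := by
    have hset : MeasurableSet {p : (Fin n → ℝ) × ℝ | p.2 * n ≤ l1 p.1} :=
      measurableSet_le (measurable_snd.mul_const _) (measurable_l1.comp measurable_fst)
    exact Measurable.ite hset
      ((hgcont.measurable.comp measurable_snd).ennreal_ofReal) measurable_const
  have hJmeas : Measurable fun ω => ∫⁻ x in Set.Ioc b a, G x ω := by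
    exact Measurable.lintegral_prod_right hGunc
  -- the chain
  have hIint : IntegrableOn h (Set.Ioc b a) := by
    refine Measure.integrableOn_of_bounded (by simp) ?_
      (M := c * n * a * Real.exp (c * n * a ^ 2 / 2)) ?_
    · exact (hgcont.measurable.mul ((measurable_muStar.const_mul (-(n:ℝ))).exp)).aestronglyMeasurable
    · refine (ae_restrict_iff' measurableSet_Ioc).2 (Filter.Eventually.of_forall fun x hx => ?_)
      have hx0 : 0 ≤ x := le_trans hb0 hx.1.le
      have hE1 : Real.exp (-(n:ℝ) * muStar x) ≤ 1 := by
        apply Real.exp_le_one_iff.2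
        have := muStar_nonneg x
        nlinarith [hn0.le]
      have hg_nonneg : 0 ≤ g x := mul_nonneg (mul_nonneg (mul_nonneg hc0.le hn0.le) hx0) (Real.exp_nonneg _)
      have hh_nonneg : 0 ≤ h x := mul_nonneg hg_nonneg (Real.exp_nonneg _)
      rw [Real.norm_of_nonneg hh_nonneg]
      have hgle : g x ≤ c * n * a * Real.exp (c * n * a ^ 2 / 2) := by
        have hxa : x ≤ a := hx.2
        have hx2 : x ^ 2 ≤ a ^ 2 := by nlinarith
        have hexple : Real.exp (c * n * x ^ 2 / 2) ≤ Real.exp (c * n * a ^ 2 / 2) := by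
          apply Real.exp_le_exp.2
          have h' := mul_le_mul_of_nonneg_left hx2 (mul_nonneg hc0.le hn0.le)
          linarith
        have hcnx : c * n * x ≤ c * n * a :=
          mul_le_mul_of_nonneg_left hxa (mul_nonneg hc0.le hn0.le)
        calc g x = c * n * x * Real.exp (c * n * x ^ 2 / 2) := rfl
          _ ≤ c * n * a * Real.exp (c * n * x ^ 2 / 2) := by
              exact mul_le_mul_of_nonneg_right hcnx (Real.exp_nonneg _)
          _ ≤ c * n * a * Real.exp (c * n * a ^ 2 / 2) := by
              refine mul_le_mul_of_nonneg_left hexple (mul_nonneg (mul_nonneg hc0.le hn0.le) (le_trans hb0 (le_trans hx.1.le hxa)))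
      calc h x ≤ g x * 1 := mul_le_mul_of_nonneg_left hE1 hg_nonneg
        _ = g x := mul_one _
        _ ≤ _ := hgle
  have hInonneg : 0 ≤ ∫ x in Set.Ioc b a, h x := by
    refine setIntegral_nonneg measurableSet_Ioc fun x hx => ?_
    have hx0 : 0 ≤ x := le_trans hb0 hx.1.le
    exact mul_nonneg (mul_nonneg (mul_nonneg (mul_nonneg hc0.le hn0.le) hx0) (Real.exp_nonneg _)) (Real.exp_nonneg _)
  have chain : (∫⁻ ω in A, ENNReal.ofReal (Real.exp (c * l1 ω ^ 2 / (2 * n))) ∂μ)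
      ≤ ENNReal.ofReal (Real.exp (c * n / Real.pi))
        + ENNReal.ofReal (∫ x in Set.Ioc b a, h x) := by
    calc (∫⁻ ω in A, ENNReal.ofReal (Real.exp (c * l1 ω ^ 2 / (2 * n))) ∂μ)
        ≤ ∫⁻ ω in A, (ENNReal.ofReal (Real.exp (c * n / Real.pi))
            + ∫⁻ x in Set.Ioc b a, G x ω) ∂μ := by
          refine lintegral_mono_ae ((ae_restrict_iff' hA).2 (Filter.Eventually.of_forall hpt))
      _ = ENNReal.ofReal (Real.exp (c * n / Real.pi)) * μ A
            + ∫⁻ ω in A, (∫⁻ x in Set.Ioc b a, G x ω) ∂μ := by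
          rw [lintegral_add_left measurable_const, setLIntegral_const]
      _ ≤ ENNReal.ofReal (Real.exp (c * n / Real.pi)) * 1
            + ∫⁻ ω, (∫⁻ x in Set.Ioc b a, G x ω) ∂μ := by
          exact add_le_add (mul_le_mul_right prob_le_one _) (setLIntegral_le_lintegral _ _)
      _ = ENNReal.ofReal (Real.exp (c * n / Real.pi))
            + ∫⁻ x in Set.Ioc b a, (∫⁻ ω, G x ω ∂μ) := by
          rw [mul_one, lintegral_lintegral_swap hGunc.aemeasurable]
      _ ≤ ENNReal.ofReal (Real.exp (c * n / Real.pi))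
            + ∫⁻ x in Set.Ioc b a, ENNReal.ofReal (h x) := by
          refine add_le_add_right ?_ _
          refine lintegral_mono_ae ((ae_restrict_iff' measurableSet_Ioc).2
            (Filter.Eventually.of_forall fun x hx => ?_))
          have hx0 : 0 ≤ x := le_trans hb0 hx.1.le
          have hg_nonneg : 0 ≤ g x := mul_nonneg (mul_nonneg (mul_nonneg hc0.le hn0.le) hx0) (Real.exp_nonneg _)
          have hind : (∫⁻ ω, G x ω ∂μ) = ENNReal.ofReal (g x) * μ {ω | x * n ≤ l1 ω} := by
            have heq : (fun ω => G x ω)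
                = Set.indicator {ω : Fin n → ℝ | x * n ≤ l1 ω} (fun _ => ENNReal.ofReal (g x)) := by
              funext ω
              rw [Set.indicator_apply]
              rfl
            rw [heq, lintegral_indicator (measurableSet_le measurable_const
              measurable_l1), setLIntegral_const]
          rw [hind]
          calc ENNReal.ofReal (g x) * μ {ω | x * n ≤ l1 ω}
              ≤ ENNReal.ofReal (g x) * ENNReal.ofReal (Real.exp (-(n:ℝ) * muStar x)) := by
                exact mul_le_mul_right (chernoff n hn x) _
            _ = ENNReal.ofReal (h x) := by
                rw [← ENNReal.ofReal_mul hg_nonneg]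
      _ = ENNReal.ofReal (Real.exp (c * n / Real.pi))
            + ENNReal.ofReal (∫ x in Set.Ioc b a, h x) := by
          congr 1
          rw [← MeasureTheory.ofReal_integral_eq_lintegral_ofReal hIint]
          refine (ae_restrict_iff' measurableSet_Ioc).2 (Filter.Eventually.of_forall fun x hx => ?_)
          have hx0 : 0 ≤ x := le_trans hb0 hx.1.le
          exact mul_nonneg (mul_nonneg (mul_nonneg (mul_nonneg hc0.le hn0.le) hx0) (Real.exp_nonneg _))
            (Real.exp_nonneg _)
  -- convert to reals
  have hfin : ENNReal.ofReal (Real.exp (c * n / Real.pi))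
      + ENNReal.ofReal (∫ x in Set.Ioc b a, h x) ≠ ⊤ := by
    simp [ENNReal.add_ne_top]
  have := ENNReal.toReal_mono hfin chain
  rw [ENNReal.toReal_add ENNReal.ofReal_ne_top ENNReal.ofReal_ne_top,
    ENNReal.toReal_ofReal (Real.exp_nonneg _), ENNReal.toReal_ofReal hInonneg] at this
  refine le_trans this ?_
  refine add_le_add_right (le_of_eq ?_) _
  rw [← intervalIntegral.integral_of_le ha, ← intervalIntegral.integral_const_mul]
  refine intervalIntegral.integral_congr fun x hx => ?_
  show g x * Real.exp (-(n:ℝ) * muStar x) = c * ↑n * (x * Real.exp ((n:ℝ) * (c * x ^ 2 / 2 - muStar x)))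
  rw [hgdef]
  simp only
  rw [show (n:ℝ) * (c * x ^ 2 / 2 - muStar x) = c * ↑n * x ^ 2 / 2 + -(n:ℝ) * muStar x from by ring,
    Real.exp_add]
  ring
end

section
/- Let u, λ, ε > 0 with λ > ε. Let X be a real random variable such that the moment generating function E[e^{cX}] is finite for all c ≤ λ + ε. For a ∈ ℝ define g_a(c) = e^{−ac}·E[e^{cX}]. Then P( X ≥ a − u ) ≥ e^{−λu}·( g_a(λ) − e^{−εu}·( g_a(λ+ε) + g_a(λ−ε) ) ). -/
open MeasureTheory ProbabilityTheory

private lemma ptwise17 {u lam eps a : ℝ} (hu : 0 < u) (hlam : 0 < lam) (heps : 0 < eps)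
    (y : ℝ) :
    Real.exp (lam * (y - a)) ≤ (if a - u ≤ y then Real.exp (lam * u) else 0) +
      Real.exp (-eps * u) *
        (Real.exp ((lam - eps) * (y - a)) + Real.exp ((lam + eps) * (y - a))) := by
  have p1 := Real.exp_pos (-eps * u)
  have p2 := Real.exp_pos ((lam - eps) * (y - a))
  have p3 := Real.exp_pos ((lam + eps) * (y - a))
  by_cases h1 : a - u ≤ y
  · rw [if_pos h1]
    by_cases h2 : y - a ≤ u
    · have h3 : Real.exp (lam * (y - a)) ≤ Real.exp (lam * u) :=
        Real.exp_le_exp.mpr (by nlinarith)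
      nlinarith
    · push_neg at h2
      have h3 : Real.exp (lam * (y - a)) ≤
          Real.exp (-eps * u) * Real.exp ((lam + eps) * (y - a)) := by
        rw [← Real.exp_add]; exact Real.exp_le_exp.mpr (by nlinarith)
      have := Real.exp_pos (lam * u)
      nlinarith
  · push_neg at h1
    rw [if_neg (not_le.mpr h1)]
    have h3 : Real.exp (lam * (y - a)) ≤
        Real.exp (-eps * u) * Real.exp ((lam - eps) * (y - a)) := by
      rw [← Real.exp_add]; exact Real.exp_le_exp.mpr (by nlinarith)
    nlinarith

theorem stmt17 {Ω : Type*} [MeasureSpace Ω] [IsProbabilityMeasure (ℙ : Measure Ω)]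
    (X : Ω → ℝ) (u lam eps : ℝ) (hu : 0 < u) (hlam : 0 < lam) (heps : 0 < eps)
    (hel : eps < lam)
    (hmgf : ∀ c : ℝ, c ≤ lam + eps → Integrable (fun ω => Real.exp (c * X ω)))
    (a : ℝ) :
    Real.exp (-lam * u) *
        (Real.exp (-a * lam) * (∫ ω, Real.exp (lam * X ω)) -
          Real.exp (-eps * u) *
            (Real.exp (-a * (lam + eps)) * (∫ ω, Real.exp ((lam + eps) * X ω)) +
              Real.exp (-a * (lam - eps)) * (∫ ω, Real.exp ((lam - eps) * X ω)))) ≤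
      (ℙ {ω | a - u ≤ X ω}).toReal := by
  have hle1 : lam ≤ lam + eps := by linarith
  have hle2 : lam - eps ≤ lam + eps := by linarith
  have hle3 : lam + eps ≤ lam + eps := le_refl _
  -- X is a.e. measurable
  have hX : AEMeasurable X ℙ := by
    have h := (hmgf lam hle1).aemeasurable
    have h2 : AEMeasurable (fun ω => Real.log (Real.exp (lam * X ω)) / lam) ℙ :=
      (Real.measurable_log.comp_aemeasurable h).div_const lam
    refine h2.congr (Filter.Eventually.of_forall fun ω => ?_)
    show Real.log (Real.exp (lam * X ω)) / lam = X ω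
    rw [Real.log_exp]
    exact mul_div_cancel_left₀ _ hlam.ne'
  set Y := hX.mk X with hYdef
  have hXY : X =ᵐ[ℙ] Y := hX.ae_eq_mk
  have hYm : Measurable Y := hX.measurable_mk
  set s : Set Ω := {ω | a - u ≤ Y ω} with hsdef
  have hs : MeasurableSet s := measurableSet_le measurable_const hYm
  -- integrability for Y
  have hint : ∀ c : ℝ, c ≤ lam + eps → Integrable (fun ω => Real.exp (c * Y ω)) :=
    fun c hc => (hmgf c hc).congr (hXY.mono fun ω h => by simp [h])
  have hintc : ∀ c : ℝ, c ≤ lam + eps →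
      Integrable (fun ω => Real.exp (c * (Y ω - a))) := by
    intro c hc
    refine ((hint c hc).const_mul (Real.exp (-(c * a)))).congr
      (Filter.Eventually.of_forall fun ω => ?_)
    show Real.exp (-(c * a)) * Real.exp (c * Y ω) = Real.exp (c * (Y ω - a))
    rw [← Real.exp_add]; congr 1; ring
  have hind : Integrable (s.indicator (fun _ => Real.exp (lam * u))) ℙ :=
    (integrable_const _).indicator hs
  have h2int : Integrable (fun ω => Real.exp (-eps * u) *
      (Real.exp ((lam - eps) * (Y ω - a)) + Real.exp ((lam + eps) * (Y ω - a)))) ℙ := by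
    have := ((hintc (lam - eps) hle2).add (hintc (lam + eps) hle3)).const_mul
      (Real.exp (-eps * u))
    simpa using this
  -- integral congruences
  have hIeq : ∀ c : ℝ, (∫ ω, Real.exp (c * X ω)) = ∫ ω, Real.exp (c * Y ω) :=
    fun c => integral_congr_ae (hXY.mono fun ω h => by simp [h])
  have hPeq : ℙ {ω | a - u ≤ X ω} = ℙ s := by
    apply measure_congr
    filter_upwards [hXY] with ω h
    change (a - u ≤ X ω) = (a - u ≤ Y ω)
    rw [h]
  -- main pointwise-based integral inequality
  have key : (∫ ω, Real.exp (lam * (Y ω - a))) ≤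
      ∫ ω, (s.indicator (fun _ => Real.exp (lam * u)) ω +
        Real.exp (-eps * u) *
          (Real.exp ((lam - eps) * (Y ω - a)) + Real.exp ((lam + eps) * (Y ω - a)))) := by
    refine integral_mono (hintc lam hle1) (hind.add h2int) ?_
    intro ω
    have h := ptwise17 (a := a) hu hlam heps (Y ω)
    simpa [Set.indicator_apply, hsdef, Set.mem_setOf_eq] using h
  -- split integrals
  have hsplit : ∀ c : ℝ, (∫ ω, Real.exp (c * (Y ω - a))) =
      Real.exp (-a * c) * ∫ ω, Real.exp (c * Y ω) := by
    intro c
    rw [← integral_const_mul]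
    apply integral_congr_ae
    filter_upwards with ω
    rw [← Real.exp_add]; congr 1; ring
  have hrhs : (∫ ω, (s.indicator (fun _ => Real.exp (lam * u)) ω +
        Real.exp (-eps * u) *
          (Real.exp ((lam - eps) * (Y ω - a)) + Real.exp ((lam + eps) * (Y ω - a))))) =
      (ℙ s).toReal * Real.exp (lam * u) +
        Real.exp (-eps * u) *
          (Real.exp (-a * (lam - eps)) * (∫ ω, Real.exp ((lam - eps) * Y ω)) +
            Real.exp (-a * (lam + eps)) * (∫ ω, Real.exp ((lam + eps) * Y ω))) := by
    rw [integral_add hind h2int, integral_indicator_const _ hs, integral_const_mul,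
      integral_add (hintc (lam - eps) hle2) (hintc (lam + eps) hle3),
      hsplit (lam - eps), hsplit (lam + eps), smul_eq_mul, measureReal_def]
  rw [hPeq, hIeq lam, hIeq (lam + eps), hIeq (lam - eps)]
  rw [hsplit lam, hrhs] at key
  set P := (ℙ s).toReal
  set A := ∫ ω, Real.exp (lam * Y ω)
  set B := ∫ ω, Real.exp ((lam + eps) * Y ω)
  set C := ∫ ω, Real.exp ((lam - eps) * Y ω)
  have e1 : Real.exp (-lam * u) * Real.exp (lam * u) = 1 := by
    rw [← Real.exp_add]; simp
  have e2 := Real.exp_pos (-lam * u)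
  have key3 : Real.exp (-a * lam) * A -
      Real.exp (-eps * u) * (Real.exp (-a * (lam + eps)) * B +
        Real.exp (-a * (lam - eps)) * C) ≤ P * Real.exp (lam * u) := by nlinarith [key]
  calc Real.exp (-lam * u) * (Real.exp (-a * lam) * A -
        Real.exp (-eps * u) * (Real.exp (-a * (lam + eps)) * B +
          Real.exp (-a * (lam - eps)) * C))
      ≤ Real.exp (-lam * u) * (P * Real.exp (lam * u)) :=
        mul_le_mul_of_nonneg_left key3 e2.le
    _ = P * (Real.exp (-lam * u) * Real.exp (lam * u)) := by ring
    _ = P := by rw [e1, mul_one]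
end
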